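/- Let r ≥ 3 be an integer and let H be a linear r-graph on vertex set [n] containing no subgraph isomorphic to C_4^r. Then for every edge e of H, the number of copies of C_3^r in H that contain e as an edge is at most C(r,2) · (4r² - 10r + 7), where C(r,2) = r(r-1)/2. -/

import Mathlib

/-!
Fix the edge `e₀`. A linear triangle through `e₀` consists of two further edges `a`, `b` with
`e₀ ∩ a = {x}`, `e₀ ∩ b = {y}`, `x ≠ y` and `a ∩ b ≠ ∅`; orienting it so that `x < y`, it is
enough to bound, for each of the `C(r,2)` pairs `x < y` in `e₀`, the number of such pairs
`(a, b)` by `2 (r-1)²`. Fix one of them, `(f, g)`. For any other `(a, b)`, either `b` meets `f`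
or `a` meets `g`, since otherwise `f, g, b, a` is a `C₄`. By linearity, `b` is determined by `y`
and its vertex in `f \ e₀`, and then `a` by `x` and its vertex in `b \ e₀`, so at most `(r-1)²`
pairs have `b` meeting `f`; symmetrically for `a` meeting `g`. Finally
`2 (r-1)² ≤ 4r² - 10r + 7`.
-/

/-- `e` (indexed cyclically by `i mod ℓ`) forms an `ℓ`-edge linear cycle: the edges are
pairwise distinct, consecutive edges meet in exactly one vertex, non-consecutive edges are
disjoint, and the connecting vertices are pairwise distinct. -/
def IsLinearCycleOf {V : Type} [DecidableEq V] (ℓ : ℕ) (e : ℕ → Finset V) : Prop :=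
  (∀ i < ℓ, ∀ j < ℓ, i ≠ j → e i ≠ e j) ∧
  (∀ i < ℓ, (e i ∩ e ((i + 1) % ℓ)).card = 1) ∧
  (∀ i < ℓ, ∀ j < ℓ, i ≠ j → (i + 1) % ℓ ≠ j → (j + 1) % ℓ ≠ i → e i ∩ e j = ∅) ∧
  (∀ i < ℓ, ∀ j < ℓ, i ≠ j → e i ∩ e ((i + 1) % ℓ) ≠ e j ∩ e ((j + 1) % ℓ))

/-- The hypergraph `H` contains a linear cycle of length `ℓ` (a copy of `C_ℓ^r`). -/
def HasLinearCycle {V : Type} [DecidableEq V] (H : Finset (Finset V)) (ℓ : ℕ) : Prop :=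
  ∃ e : ℕ → Finset V, (∀ i < ℓ, e i ∈ H) ∧ IsLinearCycleOf ℓ e

open Finset

variable {V : Type} [DecidableEq V]

section Cycles

variable {e : ℕ → Finset V}

theorem IsLinearCycleOf.card_inter_eq_one_of_three (h : IsLinearCycleOf 3 e) {i j : ℕ}
    (hi : i < 3) (hj : j < 3) (hij : i ≠ j) : #(e i ∩ e j) = 1 := by
  have h0 := h.2.1 0 (by norm_num)
  have h1 := h.2.1 1 (by norm_num)
  have h2 := h.2.1 2 (by norm_num)
  interval_cases i <;> interval_cases j <;> simp_all [inter_comm]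

theorem IsLinearCycleOf.inter_ne_inter_of_three (h : IsLinearCycleOf 3 e) {i j k : ℕ}
    (hi : i < 3) (hj : j < 3) (hk : k < 3) (hij : i ≠ j) (hik : i ≠ k) (hjk : j ≠ k) :
    e i ∩ e j ≠ e i ∩ e k := by
  have h01 := h.2.2.2 0 (by norm_num) 1 (by norm_num) (by norm_num)
  have h02 := h.2.2.2 0 (by norm_num) 2 (by norm_num) (by norm_num)
  have h12 := h.2.2.2 1 (by norm_num) 2 (by norm_num) (by norm_num)
  interval_cases i <;> interval_cases j <;> interval_cases k <;>
    simp_all [inter_comm, eq_comm]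

theorem isLinearCycleOf_four (h01 : #(e 0 ∩ e 1) = 1) (h12 : #(e 1 ∩ e 2) = 1)
    (h23 : #(e 2 ∩ e 3) = 1) (h30 : #(e 3 ∩ e 0) = 1)
    (h02 : Disjoint (e 0) (e 2)) (h13 : Disjoint (e 1) (e 3)) : IsLinearCycleOf 4 e := by
  obtain ⟨v₀, hv₀⟩ := card_eq_one.1 h01
  obtain ⟨v₁, hv₁⟩ := card_eq_one.1 h12
  obtain ⟨v₂, hv₂⟩ := card_eq_one.1 h23
  obtain ⟨v₃, hv₃⟩ := card_eq_one.1 h30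
  have m₀ := mem_inter.1 (hv₀ ▸ mem_singleton_self v₀)
  have m₁ := mem_inter.1 (hv₁ ▸ mem_singleton_self v₁)
  have m₂ := mem_inter.1 (hv₂ ▸ mem_singleton_self v₂)
  have m₃ := mem_inter.1 (hv₃ ▸ mem_singleton_self v₃)
  have d₀₂ := disjoint_left.1 h02
  have d₁₃ := disjoint_left.1 h13
  refine ⟨fun i hi j hj hij => ?_, fun i hi => ?_, fun i hi j hj hij h₁ h₂ => ?_,
    fun i hi j hj hij => ?_⟩
  · interval_cases i <;> interval_cases j <;> grind
  · interval_cases i <;> assumption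
  · interval_cases i <;> interval_cases j <;> grind [disjoint_iff_inter_eq_empty]
  · interval_cases i <;> interval_cases j <;>
      simp only [Nat.reduceAdd, Nat.reduceMod, hv₀, hv₁, hv₂, hv₃, ne_eq, singleton_inj] <;>
      grind

theorem hasLinearCycle_four {H : Finset (Finset V)} {a b c d : Finset V}
    (ha : a ∈ H) (hb : b ∈ H) (hc : c ∈ H) (hd : d ∈ H)
    (hab : #(a ∩ b) = 1) (hbc : #(b ∩ c) = 1) (hcd : #(c ∩ d) = 1) (hda : #(d ∩ a) = 1)
    (hac : Disjoint a c) (hbd : Disjoint b d) : HasLinearCycle H 4 := by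
  refine ⟨fun i => [a, b, c, d].getD i ∅, fun i hi => ?_,
    isLinearCycleOf_four hab hbc hcd hda hac hbd⟩
  interval_cases i <;> assumption

end Cycles

def IsLinearHypergraph (H : Finset (Finset V)) : Prop :=
  ∀ e ∈ H, ∀ f ∈ H, e ≠ f → #(e ∩ f) ≤ 1

namespace IsLinearHypergraph

variable {H : Finset (Finset V)} {a b : Finset V}

theorem eq_of_mem_of_mem (hH : IsLinearHypergraph H) (ha : a ∈ H) (hb : b ∈ H) {u v : V}
    (huv : u ≠ v) (hua : u ∈ a) (hva : v ∈ a) (hub : u ∈ b) (hvb : v ∈ b) : a = b := by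
  by_contra hab
  have h₁ := hH a ha b hb hab
  have h₂ : 1 < #(a ∩ b) :=
    one_lt_card.2 ⟨u, mem_inter.2 ⟨hua, hub⟩, v, mem_inter.2 ⟨hva, hvb⟩, huv⟩
  omega

theorem card_inter_eq_one (hH : IsLinearHypergraph H) (ha : a ∈ H) (hb : b ∈ H) (hab : a ≠ b)
    (h : (a ∩ b).Nonempty) : #(a ∩ b) = 1 :=
  le_antisymm (hH a ha b hb hab) h.card_pos

theorem card_filter_mem_mem_le_one (hH : IsLinearHypergraph H) {u v : V} (huv : u ≠ v) :
    #{b ∈ H | u ∈ b ∧ v ∈ b} ≤ 1 := by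
  refine card_le_one.2 fun a ha b hb => ?_
  rw [mem_filter] at ha hb
  exact hH.eq_of_mem_of_mem ha.1 hb.1 huv ha.2.1 ha.2.2 hb.2.1 hb.2.2

theorem card_filter_mem_inter_nonempty_le (hH : IsLinearHypergraph H) {y : V} {W : Finset V}
    (hy : y ∉ W) : #{b ∈ H | y ∈ b ∧ (W ∩ b).Nonempty} ≤ #W := by
  calc #{b ∈ H | y ∈ b ∧ (W ∩ b).Nonempty}
      ≤ #(W.biUnion fun w => {b ∈ H | y ∈ b ∧ w ∈ b}) := by
        refine card_le_card fun b hb => ?_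
        obtain ⟨hbH, hyb, w, hw⟩ := mem_filter.1 hb
        rw [mem_inter] at hw
        exact mem_biUnion.2 ⟨w, hw.1, mem_filter.2 ⟨hbH, hyb, hw.2⟩⟩
    _ ≤ #W * 1 := card_biUnion_le_card_mul _ _ _ fun w hw =>
        hH.card_filter_mem_mem_le_one (ne_of_mem_of_not_mem hw hy).symm
    _ = #W := mul_one _

end IsLinearHypergraph

section Triangles

variable {H : Finset (Finset V)} {e₀ a b c f g : Finset V} {x y : V} {r : ℕ}

theorem mem_of_inter_eq_singleton {s t : Finset V} (h : s ∩ t = {x}) : x ∈ s ∧ x ∈ t :=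
  mem_inter.1 (h ▸ mem_singleton_self x)

theorem disjoint_inter_of_inter_eq_singleton (ha : e₀ ∩ a = {x}) (hb : e₀ ∩ b = {y})
    (hxy : x ≠ y) : Disjoint e₀ (a ∩ b) := by
  refine disjoint_left.2 fun z hz hzab => hxy ?_
  have hzx := mem_singleton.1 (ha ▸ mem_inter.2 ⟨hz, (mem_inter.1 hzab).1⟩)
  have hzy := mem_singleton.1 (hb ▸ mem_inter.2 ⟨hz, (mem_inter.1 hzab).2⟩)
  exact hzx.symm.trans hzy

-- For `x ≠ y` the three edges `e₀`, `a`, `b` are automatically distinct and `a ∩ b` avoids `e₀`.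
def trianglePairs (H : Finset (Finset V)) (e₀ : Finset V) (x y : V) :
    Finset (Finset V × Finset V) :=
  {p ∈ H ×ˢ H | e₀ ∩ p.1 = {x} ∧ e₀ ∩ p.2 = {y} ∧ (p.1 ∩ p.2).Nonempty}

@[simp]
theorem mk_mem_trianglePairs :
    (a, b) ∈ trianglePairs H e₀ x y ↔
      a ∈ H ∧ b ∈ H ∧ e₀ ∩ a = {x} ∧ e₀ ∩ b = {y} ∧ (a ∩ b).Nonempty := by
  simp [trianglePairs, and_assoc]

theorem swap_mem_trianglePairs {p : Finset V × Finset V} :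
    p.swap ∈ trianglePairs H e₀ y x ↔ p ∈ trianglePairs H e₀ x y := by
  obtain ⟨a, b⟩ := p
  simp only [Prod.swap_prod_mk, mk_mem_trianglePairs, inter_comm b a]
  tauto

theorem inter_nonempty_or_inter_nonempty_of_not_hasLinearCycle_four
    (hH : IsLinearHypergraph H) (hC4 : ¬ HasLinearCycle H 4) (hxy : x ≠ y)
    (hab : (a, b) ∈ trianglePairs H e₀ x y) (hfg : (f, g) ∈ trianglePairs H e₀ x y) :
    (f ∩ b).Nonempty ∨ (a ∩ g).Nonempty := by
  rw [mk_mem_trianglePairs] at hab hfg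
  obtain ⟨haH, hbH, hxa, hyb, hab⟩ := hab
  obtain ⟨hfH, hgH, hxf, hyg, hfg⟩ := hfg
  by_contra! h
  obtain ⟨hfb, hag⟩ := h
  have hne {c d : Finset V} (hc : e₀ ∩ c = {x}) (hd : e₀ ∩ d = {y}) : c ≠ d := fun h =>
    hxy (singleton_inj.1 (hc.symm.trans (h ▸ hd)))
  refine hC4 (hasLinearCycle_four hfH hgH hbH haH ?_ ?_ ?_ ?_ ?_ ?_)
  · exact hH.card_inter_eq_one hfH hgH (hne hxf hyg) hfg
  · refine hH.card_inter_eq_one hgH hbH ?_ ⟨y, mem_inter.2 ⟨(mem_of_inter_eq_singleton hyg).2,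
      (mem_of_inter_eq_singleton hyb).2⟩⟩
    rintro rfl
    exact hfg.ne_empty hfb
  · exact hH.card_inter_eq_one hbH haH (hne hxa hyb).symm (inter_comm a b ▸ hab)
  · refine hH.card_inter_eq_one haH hfH ?_ ⟨x, mem_inter.2 ⟨(mem_of_inter_eq_singleton hxa).2,
      (mem_of_inter_eq_singleton hxf).2⟩⟩
    rintro rfl
    exact hfg.ne_empty hag
  · exact disjoint_iff_inter_eq_empty.2 hfb
  · exact disjoint_iff_inter_eq_empty.2 (inter_comm a g ▸ hag)

theorem card_sdiff_le_pred (hc : #c = r) {v : V} (hvc : v ∈ c) (hv : v ∈ e₀) :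
    #(c \ e₀) ≤ r - 1 := by
  have h₁ := card_sdiff_add_card_inter c e₀
  have h₂ : 0 < #(c ∩ e₀) := card_pos.2 ⟨v, mem_inter.2 ⟨hvc, hv⟩⟩
  omega

theorem card_filter_inter_snd_nonempty_le (hH : IsLinearHypergraph H) (hunif : ∀ e ∈ H, #e = r)
    (hxy : x ≠ y) (hfg : (f, g) ∈ trianglePairs H e₀ x y) :
    #{p ∈ trianglePairs H e₀ x y | (f ∩ p.2).Nonempty} ≤ (r - 1) * (r - 1) := by
  obtain ⟨hfH, -, hxf, hyg, -⟩ := mk_mem_trianglePairs.1 hfg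
  have hy : y ∈ e₀ := (mem_of_inter_eq_singleton hyg).1
  set B := {b ∈ H | y ∈ b ∧ ((f \ e₀) ∩ b).Nonempty}
  set A := fun b => {a ∈ H | x ∈ a ∧ ((b \ e₀) ∩ a).Nonempty}
  calc #{p ∈ trianglePairs H e₀ x y | (f ∩ p.2).Nonempty}
      ≤ #(B.biUnion fun b => A b ×ˢ {b}) := card_le_card ?_
    _ ≤ #B * (r - 1) := card_biUnion_le_card_mul _ _ _ fun b hb => ?_
    _ ≤ (r - 1) * (r - 1) := Nat.mul_le_mul_right _ ?_
  · rintro ⟨a, b⟩ hp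
    rw [mem_filter, mk_mem_trianglePairs] at hp
    obtain ⟨⟨haH, hbH, hxa, hyb, z, hz⟩, w, hw⟩ := hp
    have hz₀ := disjoint_right.1 (disjoint_inter_of_inter_eq_singleton hxa hyb hxy) hz
    have hw₀ := disjoint_right.1 (disjoint_inter_of_inter_eq_singleton hxf hyb hxy) hw
    rw [mem_inter] at hz hw
    refine mem_biUnion.2 ⟨b, mem_filter.2 ⟨hbH, (mem_of_inter_eq_singleton hyb).2, w, ?_⟩,
      mem_product.2 ⟨mem_filter.2 ⟨haH, (mem_of_inter_eq_singleton hxa).2, z, ?_⟩,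
        mem_singleton_self b⟩⟩
    · exact mem_inter.2 ⟨mem_sdiff.2 ⟨hw.1, hw₀⟩, hw.2⟩
    · exact mem_inter.2 ⟨mem_sdiff.2 ⟨hz.2, hz₀⟩, hz.1⟩
  · rw [card_product, card_singleton, mul_one]
    obtain ⟨hbH, hyb, -⟩ := mem_filter.1 hb
    exact (hH.card_filter_mem_inter_nonempty_le fun h => (mem_sdiff.1 h).2
      (mem_of_inter_eq_singleton hxf).1).trans (card_sdiff_le_pred (hunif b hbH) hyb hy)
  · exact (hH.card_filter_mem_inter_nonempty_le fun h => (mem_sdiff.1 h).2 hy).trans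
      (card_sdiff_le_pred (hunif f hfH) (mem_of_inter_eq_singleton hxf).2
        (mem_of_inter_eq_singleton hxf).1)

theorem card_filter_fst_inter_nonempty_le (hH : IsLinearHypergraph H) (hunif : ∀ e ∈ H, #e = r)
    (hxy : x ≠ y) (hfg : (f, g) ∈ trianglePairs H e₀ x y) :
    #{p ∈ trianglePairs H e₀ x y | (p.1 ∩ g).Nonempty} ≤ (r - 1) * (r - 1) := by
  have hgf : (g, f) ∈ trianglePairs H e₀ y x := swap_mem_trianglePairs.2 hfg
  refine le_of_eq_of_le ?_ (card_filter_inter_snd_nonempty_le hH hunif hxy.symm hgf)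
  refine card_nbij' Prod.swap Prod.swap (fun p hp => ?_) (fun p hp => ?_)
    (fun p _ => p.swap_swap) (fun p _ => p.swap_swap)
  · rw [mem_coe, mem_filter] at hp ⊢
    exact ⟨swap_mem_trianglePairs.2 hp.1, by rw [Prod.snd_swap, inter_comm]; exact hp.2⟩
  · rw [mem_coe, mem_filter] at hp ⊢
    exact ⟨swap_mem_trianglePairs.2 hp.1, by rw [Prod.fst_swap, inter_comm]; exact hp.2⟩

theorem card_trianglePairs_le (hH : IsLinearHypergraph H) (hunif : ∀ e ∈ H, #e = r)
    (hC4 : ¬ HasLinearCycle H 4) (hxy : x ≠ y) :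
    #(trianglePairs H e₀ x y) ≤ 2 * (r - 1) ^ 2 := by
  obtain hT | ⟨⟨f, g⟩, hfg⟩ := (trianglePairs H e₀ x y).eq_empty_or_nonempty
  · simp [hT]
  calc #(trianglePairs H e₀ x y)
      ≤ #({p ∈ trianglePairs H e₀ x y | (f ∩ p.2).Nonempty} ∪
          {p ∈ trianglePairs H e₀ x y | (p.1 ∩ g).Nonempty}) := by
        rw [← filter_or]
        exact card_le_card fun p hp => mem_filter.2 ⟨hp,
          inter_nonempty_or_inter_nonempty_of_not_hasLinearCycle_four hH hC4 hxy hp hfg⟩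
    _ ≤ (r - 1) * (r - 1) + (r - 1) * (r - 1) :=
        (card_union_le _ _).trans (add_le_add (card_filter_inter_snd_nonempty_le hH hunif hxy hfg)
          (card_filter_fst_inter_nonempty_le hH hunif hxy hfg))
    _ = 2 * (r - 1) ^ 2 := by ring

theorem exists_eq_insert_of_isLinearCycleOf_three {s : Finset (Finset V)} {e : ℕ → Finset V}
    (hs : #s = 3) (he₀ : e₀ ∈ s) (he : ∀ i < 3, e i ∈ s) (hcyc : IsLinearCycleOf 3 e) :
    ∃ a b x y, x ≠ y ∧ s = {e₀, a, b} ∧ e₀ ∩ a = {x} ∧ e₀ ∩ b = {y} ∧ (a ∩ b).Nonempty := by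
  have hrange : (range 3).image e = s := by
    refine eq_of_subset_of_card_le (image_subset_iff.2 fun i hi => he i (mem_range.1 hi)) ?_
    rw [hs, card_image_of_injOn fun i hi j hj hij => ?_, card_range]
    by_contra hne
    exact hcyc.1 i (mem_range.1 hi) j (mem_range.1 hj) hne hij
  have hindex : ∀ u ∈ s, ∃ i < 3, e i = u := fun u hu => by
    simpa [← hrange] using hu
  obtain ⟨a, b, hab, hsab⟩ := card_eq_two.1 (show #(s.erase e₀) = 2 by
    rw [card_erase_of_mem he₀, hs])
  have ha : a ∈ s.erase e₀ := hsab ▸ mem_insert_self a {b}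
  have hb : b ∈ s.erase e₀ := hsab ▸ mem_insert_of_mem (mem_singleton_self b)
  obtain ⟨i, hi, rfl⟩ := hindex e₀ he₀
  obtain ⟨j, hj, rfl⟩ := hindex a (mem_of_mem_erase ha)
  obtain ⟨k, hk, rfl⟩ := hindex b (mem_of_mem_erase hb)
  have hij : i ≠ j := by rintro rfl; exact ne_of_mem_erase ha rfl
  have hik : i ≠ k := by rintro rfl; exact ne_of_mem_erase hb rfl
  have hjk : j ≠ k := by rintro rfl; exact hab rfl
  obtain ⟨x, hx⟩ := card_eq_one.1 (hcyc.card_inter_eq_one_of_three hi hj hij)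
  obtain ⟨y, hy⟩ := card_eq_one.1 (hcyc.card_inter_eq_one_of_three hi hk hik)
  refine ⟨e j, e k, x, y, ?_, by rw [← hsab, insert_erase he₀], hx, hy,
    card_pos.1 (by rw [hcyc.card_inter_eq_one_of_three hj hk hjk]; norm_num)⟩
  rintro rfl
  exact hcyc.inter_ne_inter_of_three hi hj hk hij hik hjk (hx.trans hy.symm)

theorem card_linearTriangles_le [LinearOrder V] (hH : IsLinearHypergraph H)
    (hunif : ∀ e ∈ H, #e = r) (hC4 : ¬ HasLinearCycle H 4) (he₀ : #e₀ = r) :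
    Nat.card {s : Finset (Finset V) // s ⊆ H ∧ #s = 3 ∧ e₀ ∈ s ∧
        ∃ e : ℕ → Finset V, (∀ i < 3, e i ∈ s) ∧ IsLinearCycleOf 3 e} ≤
      r.choose 2 * (2 * (r - 1) ^ 2) := by
  set F := {q ∈ e₀ ×ˢ e₀ | q.1 < q.2}.biUnion fun q =>
    (trianglePairs H e₀ q.1 q.2).image fun p => ({e₀, p.1, p.2} : Finset (Finset V))
  have hsub : {s : Finset (Finset V) | s ⊆ H ∧ #s = 3 ∧ e₀ ∈ s ∧
      ∃ e : ℕ → Finset V, (∀ i < 3, e i ∈ s) ∧ IsLinearCycleOf 3 e} ⊆ F := by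
    rintro s ⟨hsH, hs, hes, e, he, hcyc⟩
    obtain ⟨a, b, x, y, hxy, rfl, hxa, hyb, hab⟩ :=
      exists_eq_insert_of_isLinearCycleOf_three hs hes he hcyc
    have haH : a ∈ H := hsH (by simp)
    have hbH : b ∈ H := hsH (by simp)
    have hx := (mem_of_inter_eq_singleton hxa).1
    have hy := (mem_of_inter_eq_singleton hyb).1
    rcases hxy.lt_or_gt with hlt | hlt
    · exact mem_biUnion.2 ⟨(x, y), mem_filter.2 ⟨mem_product.2 ⟨hx, hy⟩, hlt⟩,
        mem_image.2 ⟨(a, b), mk_mem_trianglePairs.2 ⟨haH, hbH, hxa, hyb, hab⟩, rfl⟩⟩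
    · exact mem_biUnion.2 ⟨(y, x), mem_filter.2 ⟨mem_product.2 ⟨hy, hx⟩, hlt⟩,
        mem_image.2 ⟨(b, a), mk_mem_trianglePairs.2 ⟨hbH, haH, hyb, hxa, inter_comm a b ▸ hab⟩,
          by rw [pair_comm]⟩⟩
  calc Nat.card _ ≤ Nat.card F := Nat.card_mono F.finite_toSet hsub
    _ = #F := Nat.card_eq_finsetCard F
    _ ≤ #{q ∈ e₀ ×ˢ e₀ | q.1 < q.2} * (2 * (r - 1) ^ 2) :=
        card_biUnion_le_card_mul _ _ _ fun q hq =>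
          card_image_le.trans (card_trianglePairs_le hH hunif hC4 (mem_filter.1 hq).2.ne)
    _ = r.choose 2 * (2 * (r - 1) ^ 2) := by rw [card_product_filter_lt, he₀]

end Triangles

theorem statement_19_general (r n : ℕ) (H : Finset (Finset (Fin n)))
    (hcard : ∀ e ∈ H, e.card = r)
    (hlin : ∀ e ∈ H, ∀ f ∈ H, e ≠ f → (e ∩ f).card ≤ 1)
    (hC4 : ¬ HasLinearCycle H 4) :
    ∀ e₀ ∈ H,
      (Nat.card {s : Finset (Finset (Fin n)) //
          s ⊆ H ∧ s.card = 3 ∧ e₀ ∈ s ∧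
          ∃ f : ℕ → Finset (Fin n), (∀ i < 3, f i ∈ s) ∧ IsLinearCycleOf 3 f} : ℝ) ≤
        (r.choose 2 : ℝ) * (4 * (r : ℝ) ^ 2 - 10 * r + 7) := by
  intro e₀ he₀
  have hbound : ((2 * (r - 1) ^ 2 : ℕ) : ℝ) ≤ 4 * (r : ℝ) ^ 2 - 10 * r + 7 := by
    rcases r with _ | k
    · norm_num
    · push_cast
      nlinarith [sq_nonneg ((k : ℝ) - 1)]
  calc (Nat.card _ : ℝ) ≤ ((r.choose 2 * (2 * (r - 1) ^ 2) : ℕ) : ℝ) := by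
        exact_mod_cast card_linearTriangles_le hlin hcard hC4 (hcard e₀ he₀)
    _ ≤ (r.choose 2 : ℝ) * (4 * (r : ℝ) ^ 2 - 10 * r + 7) := by
        rw [Nat.cast_mul]
        exact mul_le_mul_of_nonneg_left hbound (Nat.cast_nonneg _)

/-- Let `r ≥ 3` and let `H` be a linear `r`-graph on `[n]` with no copy of `C₄ʳ`.  Then for
every edge `e₀` of `H`, the number of copies of `C₃ʳ` in `H` containing `e₀` (identified
with their 3-element edge sets) is at most `C(r,2) · (4r² - 10r + 7)`. -/
theorem statement_19 (r n : ℕ) (hr : 3 ≤ r) (H : Finset (Finset (Fin n)))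
    (hcard : ∀ e ∈ H, e.card = r)
    (hlin : ∀ e ∈ H, ∀ f ∈ H, e ≠ f → (e ∩ f).card ≤ 1)
    (hC4 : ¬ HasLinearCycle H 4) :
    ∀ e₀ ∈ H,
      (Nat.card {s : Finset (Finset (Fin n)) //
          s ⊆ H ∧ s.card = 3 ∧ e₀ ∈ s ∧
          ∃ f : ℕ → Finset (Fin n), (∀ i < 3, f i ∈ s) ∧ IsLinearCycleOf 3 f} : ℝ) ≤
        (r.choose 2 : ℝ) * (4 * (r : ℝ) ^ 2 - 10 * r + 7) :=
  statement_19_general r n H hcard hlin hC4
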